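/- For every vertex v of the integer hull P_I = conv(P ∩ Z^n), there exists a Δ-deep base B of P such that ‖b_B − A_B v‖_∞ ≤ Δ − 1, i.e., all n slacks of v on the rows indexed by B are at most Δ − 1. -/

import Mathlib

/-
Let `w` be an (integral) vertex of `P_I` and `F` the rows on which the slack `b_i - A_i w` is
smaller than `Δ`. If the rows `A_F` did not span `ℝⁿ`, extend a basis of their span by rows of `A`
to a basis `A_f` of `ℝⁿ` and let `d` be the column of `adj(A_f)` belonging to a row `u` outside
the span of `A_F`. By Cramer's rule every `A_i d` is an `n × n` minor of `A`, so `|A_i d| ≤ Δ`,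
`A_F d = 0` and `A_u d = det A_f ≠ 0`. Then `w ± d` are integer points of `P` with midpoint `w`,
contradicting extremality. Hence `A_F` has rank `n`, and `n` independent rows of `F` form a
`Δ`-deep base, with `w` itself as the witness.
-/

open Matrix Set

/-- The real matrix obtained from an integer matrix by casting entries. -/
noncomputable def matR {m n : ℕ} (A : Matrix (Fin m) (Fin n) ℤ) :
    Matrix (Fin m) (Fin n) ℝ := A.map (fun a => (a : ℝ))

/-- The polyhedron `P = {x ∈ ℝⁿ : A x ≤ b}`. -/
def poly {m n : ℕ} (A : Matrix (Fin m) (Fin n) ℤ) (b : Fin m → ℤ) :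
    Set (Fin n → ℝ) := {x | ∀ i, (matR A).mulVec x i ≤ (b i : ℝ)}

/-- The set of integer points of `ℝⁿ`. -/
def intPts {n : ℕ} : Set (Fin n → ℝ) := {x | ∀ j, ∃ z : ℤ, x j = (z : ℝ)}

/-- The integer hull `P_I = conv(P ∩ ℤⁿ)`. -/
noncomputable def intHull {m n : ℕ} (A : Matrix (Fin m) (Fin n) ℤ) (b : Fin m → ℤ) :
    Set (Fin n → ℝ) := convexHull ℝ (poly A b ∩ intPts)

/-- `Δ(A)`: the maximum absolute value of determinants of all `n × n` submatrices of `A`. -/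
def maxAbsSubdet {m n : ℕ} (A : Matrix (Fin m) (Fin n) ℤ) : ℕ :=
  Finset.univ.sup fun f : Fin n → Fin m => ((A.submatrix f id).det).natAbs

/-- The rank (over `ℝ`) of the submatrix of `A` formed by the rows indexed by `J`. -/
noncomputable def rowsRank {m n : ℕ} (A : Matrix (Fin m) (Fin n) ℤ) (J : Finset (Fin m)) : ℕ :=
  ((matR A).submatrix (fun i : {i // i ∈ J} => (i : Fin m)) id).rank

/-- A `Δ`-deep base of the system `A x ≤ b`. -/
def DeepBase {m n : ℕ} (A : Matrix (Fin m) (Fin n) ℤ) (b : Fin m → ℤ) (Δ : ℕ)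
    (B : Finset (Fin m)) : Prop :=
  ∃ h : B.card = n,
    (A.submatrix (fun j : Fin n => ((B.orderIsoOfFin h j : {x // x ∈ B}) : Fin m)) id).det ≠ 0 ∧
    ∃ x : Fin n → ℝ,
      (∀ i ∈ B, (b i : ℝ) - ((Δ : ℝ) - 1) ≤ (matR A).mulVec x i) ∧
      (∀ i : Fin m, (matR A).mulVec x i ≤ (b i : ℝ))

/-- A set is convex-independent if none of its points lies in the convex hull of the others. -/
def ConvexIndependentSet {n : ℕ} (M : Set (Fin n → ℝ)) : Prop :=
  ∀ x ∈ M, x ∉ convexHull ℝ (M \ {x})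

/-- The grid `{0, 1, …, Δ-1}ⁿ` inside `ℝⁿ`. -/
def grid (n Δ : ℕ) : Set (Fin n → ℝ) := {x | ∀ j, ∃ z : ℕ, z < Δ ∧ x j = (z : ℝ)}

/-- `γ(n, Δ)`: the maximum cardinality of a convex-independent subset of `{0,…,Δ-1}ⁿ`. -/
noncomputable def gamma (n Δ : ℕ) : ℕ :=
  sSup {c : ℕ | ∃ M : Finset (Fin n → ℝ), M.card = c ∧
    (M : Set (Fin n → ℝ)) ⊆ grid n Δ ∧ ConvexIndependentSet (M : Set (Fin n → ℝ))}

namespace Matrix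

theorem submatrix_update_eq_updateRow {R α β γ : Type*} [DecidableEq β]
    (M : Matrix α γ R) (f : β → α) (u : β) (i : α) :
    M.submatrix (Function.update f u i) id = (M.submatrix f id).updateRow u (M i) := by
  ext k j
  rcases eq_or_ne k u with rfl | hk <;> simp [*]

variable {R : Type*} [CommRing R] {ι : Type*} [Fintype ι] [DecidableEq ι]

theorem det_updateRow_eq_dotProduct (M : Matrix ι ι R) (u : ι) (x : ι → R) :
    (M.updateRow u x).det = x ⬝ᵥ Mᵀ.adjugate u := by
  rw [← cramer_transpose_apply, cramer_eq_adjugate_mulVec, mulVec, dotProduct_comm]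

theorem det_updateRow_eq_zero_of_mem_span (M : Matrix ι ι R) (u : ι) {x : ι → R}
    (hx : x ∈ Submodule.span R (M '' {u}ᶜ)) : (M.updateRow u x).det = 0 := by
  let L := (detRowAlternating : (ι → R) [⋀^ι]→ₗ[R] R).toMultilinearMap.toLinearMap M u
  have hL : Submodule.span R (M '' {u}ᶜ) ≤ LinearMap.ker L :=
    Submodule.span_le.mpr fun _ ⟨k, hk, hkx⟩ => hkx ▸ det_updateRow_eq_zero hk
  exact hL hx

end Matrix

theorem eq_zero_of_add_mem_of_sub_mem_extremePoints {𝕜 E : Type*} [Field 𝕜] [LinearOrder 𝕜]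
    [IsStrictOrderedRing 𝕜] [AddCommGroup E] [Module 𝕜 E] {S : Set E} {v x : E}
    (hv : v ∈ S.extremePoints 𝕜) (hadd : v + x ∈ S) (hsub : v - x ∈ S) : x = 0 := by
  have hmid : v ∈ openSegment 𝕜 (v + x) (v - x) :=
    ⟨1 / 2, 1 / 2, by norm_num, by norm_num, by norm_num, by module⟩
  simpa using hv.2 hadd hsub hmid

section Selection

variable {K V ι : Type*} [Field K] [AddCommGroup V] [Module K V] [FiniteDimensional K V]
  {v : ι → V}

theorem LinearIndepOn.exists_finset_card_eq_finrank {r : Set ι} (hr : LinearIndepOn K v r)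
    (hspan : Submodule.span K (v '' r) = ⊤) :
    ∃ B : Finset ι, (B : Set ι) = r ∧ B.card = Module.finrank K V := by
  let b := Module.Basis.mk hr (by rw [← image_eq_range, hspan])
  have : Finite r := Module.Finite.finite_basis b
  refine ⟨r.toFinite.toFinset, by simp, ?_⟩
  rw [Module.finrank_eq_nat_card_basis b, Nat.card_eq_card_finite_toFinset]

theorem exists_linearIndependent_fin_of_span_ne_top {n : ℕ} (hn : Module.finrank K V = n)
    (hv : Submodule.span K (range v) = ⊤) {F : Set ι} (hF : Submodule.span K (v '' F) ≠ ⊤) :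
    ∃ (f : Fin n → ι) (u : Fin n), LinearIndependent K (v ∘ f) ∧
      v '' F ⊆ Submodule.span K ((v ∘ f) '' {u}ᶜ) := by
  obtain ⟨s, hsF, -, hFs, hs⟩ :=
    exists_linearIndepOn_extension (linearIndepOn_empty K v) (empty_subset F)
  obtain ⟨r, -, hsr, hr_univ, hr⟩ := exists_linearIndepOn_extension hs (subset_univ s)
  have hr_span : Submodule.span K (v '' r) = ⊤ :=
    eq_top_iff.mpr (hv ▸ Submodule.span_le.mpr (image_univ ▸ hr_univ))
  obtain ⟨B, rfl, hB⟩ := hr.exists_finset_card_eq_finrank hr_span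
  obtain ⟨x, hxB, hxs⟩ : ∃ x ∈ B, x ∉ s := by
    by_contra! hBs
    exact hF (eq_top_iff.mpr (hr_span ▸ Submodule.span_mono (image_mono
      fun y hy => hsF (hBs y hy))))
  let e : {y // y ∈ B} ≃ Fin n := B.equivFinOfCardEq (hB.trans hn)
  refine ⟨fun k => e.symm k, e ⟨x, hxB⟩, hr.comp e.symm e.symm.injective,
    hFs.trans (Submodule.span_mono ?_)⟩
  rintro _ ⟨y, hy, rfl⟩
  refine ⟨e ⟨y, hsr hy⟩, fun hyx => hxs ?_, by simp⟩
  obtain rfl : y = x := congrArg Subtype.val (e.injective hyx)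
  exact hy

theorem exists_finset_subset_linearIndepOn_card_eq_finrank {F : Set ι}
    (hF : Submodule.span K (v '' F) = ⊤) :
    ∃ B : Finset ι, ↑B ⊆ F ∧ B.card = Module.finrank K V ∧ LinearIndepOn K v B := by
  obtain ⟨r, hrF, -, hFr, hr⟩ := exists_linearIndepOn_extension (linearIndepOn_empty K v)
    (empty_subset F)
  obtain ⟨B, rfl, hB⟩ := hr.exists_finset_card_eq_finrank
    (eq_top_iff.mpr (hF ▸ Submodule.span_le.mpr hFr))
  exact ⟨B, hrF, hB, hr⟩

end Selection

section IntegerMatrix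

variable {m n : ℕ}

theorem matR_mulVec_intCast (A : Matrix (Fin m) (Fin n) ℤ) (w : Fin n → ℤ) :
    matR A *ᵥ ((↑) ∘ w) = (↑) ∘ (A *ᵥ w) :=
  funext fun i => (RingHom.map_mulVec (Int.castRingHom ℝ) A w i).symm

theorem abs_det_submatrix_le_maxAbsSubdet (A : Matrix (Fin m) (Fin n) ℤ) (f : Fin n → Fin m) :
    |(A.submatrix f id).det| ≤ maxAbsSubdet A := by
  rw [Int.abs_eq_natAbs]
  exact_mod_cast Finset.le_sup (f := fun f : Fin n → Fin m => (A.submatrix f id).det.natAbs)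
    (Finset.mem_univ f)

theorem det_submatrix_ne_zero_of_linearIndependent (A : Matrix (Fin m) (Fin n) ℤ)
    {f : Fin n → Fin m} (hf : LinearIndependent ℝ (matR A ∘ f)) :
    (A.submatrix f id).det ≠ 0 := by
  have hR : ((matR A).submatrix f id).det ≠ 0 :=
    ((isUnit_iff_isUnit_det _).mp (linearIndependent_rows_iff_isUnit.mp hf)).ne_zero
  intro h
  exact hR (by rw [show (matR A).submatrix f id = (A.submatrix f id).map (↑) from rfl,
    ← Int.cast_det, h, Int.cast_zero])

theorem exists_int_direction_of_span_ne_top (A : Matrix (Fin m) (Fin n) ℤ)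
    (hrank : (matR A).rank = n) {F : Set (Fin m)}
    (hF : Submodule.span ℝ (matR A '' F) ≠ ⊤) :
    ∃ d : Fin n → ℤ, d ≠ 0 ∧ (∀ i ∈ F, (A *ᵥ d) i = 0) ∧
      ∀ i, |(A *ᵥ d) i| ≤ maxAbsSubdet A := by
  have hrows : Submodule.span ℝ (range (matR A).row) = ⊤ := by
    apply Submodule.eq_top_of_finrank_eq
    rw [← rank_eq_finrank_span_row, hrank, Module.finrank_fin_fun]
  obtain ⟨f, u, hf, hFf⟩ :=
    exists_linearIndependent_fin_of_span_ne_top (Module.finrank_fin_fun ℝ) hrows hF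
  set d := (A.submatrix f id)ᵀ.adjugate u
  have hAd : ∀ i, (A *ᵥ d) i = (A.submatrix (Function.update f u i) id).det := fun i => by
    rw [submatrix_update_eq_updateRow, det_updateRow_eq_dotProduct]
    rfl
  refine ⟨d, fun hd => ?_, fun i hi => ?_,
    fun i => hAd i ▸ abs_det_submatrix_le_maxAbsSubdet A _⟩
  · have h := hAd (f u)
    rw [hd, mulVec_zero, Function.update_eq_self] at h
    exact det_submatrix_ne_zero_of_linearIndependent A hf h.symm
  · have h : ((matR A).submatrix (Function.update f u i) id).det = 0 := by
      rw [submatrix_update_eq_updateRow]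
      exact det_updateRow_eq_zero_of_mem_span _ u (hFf ⟨i, hi, rfl⟩)
    rw [hAd]
    exact_mod_cast (Int.cast_det (R := ℝ) _).trans h

theorem mem_poly_inter_intPts_iff {A : Matrix (Fin m) (Fin n) ℤ} {b : Fin m → ℤ}
    {x : Fin n → ℝ} : x ∈ poly A b ∩ intPts ↔ ∃ w : Fin n → ℤ, x = (↑) ∘ w ∧ A *ᵥ w ≤ b := by
  constructor
  · rintro ⟨hxP, hxZ⟩
    choose w hw using hxZ
    obtain rfl : x = (↑) ∘ w := funext hw
    refine ⟨w, rfl, fun i => ?_⟩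
    have h := hxP i
    rw [matR_mulVec_intCast, Function.comp_apply] at h
    exact_mod_cast h
  · rintro ⟨w, rfl, hw⟩
    refine ⟨fun i => ?_, fun j => ⟨w j, rfl⟩⟩
    rw [matR_mulVec_intCast, Function.comp_apply]
    exact_mod_cast hw i

theorem Matrix.mulVec_add_le_of_abs_mulVec_le {R ι κ : Type*} [CommRing R] [LinearOrder R]
    [IsOrderedRing R] [Fintype κ] (A : Matrix ι κ R) {b : ι → R} {w d : κ → R} {Δ : R}
    (hw : A *ᵥ w ≤ b) (hd : ∀ i, |(A *ᵥ d) i| ≤ Δ)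
    (hd_tight : ∀ i, b i - (A *ᵥ w) i < Δ → (A *ᵥ d) i = 0) : A *ᵥ (w + d) ≤ b := by
  intro i
  rw [mulVec_add, Pi.add_apply]
  by_cases hi : b i - (A *ᵥ w) i < Δ
  · rw [hd_tight i hi, add_zero]
    exact hw i
  · exact le_sub_iff_add_le'.mp ((le_abs_self _).trans ((hd i).trans (not_lt.mp hi)))

theorem span_rows_slack_lt_maxAbsSubdet_eq_top (A : Matrix (Fin m) (Fin n) ℤ)
    (b : Fin m → ℤ) (hrank : (matR A).rank = n) {w : Fin n → ℤ} (hw : A *ᵥ w ≤ b)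
    (hv : (↑) ∘ w ∈ (intHull A b).extremePoints ℝ) :
    Submodule.span ℝ (matR A '' {i | b i - (A *ᵥ w) i < maxAbsSubdet A}) = ⊤ := by
  by_contra hF
  obtain ⟨d, hd0, hd_tight, hdΔ⟩ := exists_int_direction_of_span_ne_top A hrank hF
  have hmem : ∀ e : Fin n → ℤ, (∀ i, |(A *ᵥ e) i| ≤ maxAbsSubdet A) →
      (∀ i, b i - (A *ᵥ w) i < maxAbsSubdet A → (A *ᵥ e) i = 0) →
      (↑) ∘ w + (↑) ∘ e ∈ intHull A b := fun e he he_tight =>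
    subset_convexHull ℝ _ <| mem_poly_inter_intPts_iff.mpr
      ⟨w + e, by ext; simp, A.mulVec_add_le_of_abs_mulVec_le hw he he_tight⟩
  have hadd := hmem d hdΔ hd_tight
  have hsub := hmem (-d) (by simpa [mulVec_neg] using hdΔ)
    (by simpa [mulVec_neg] using fun i hi => hd_tight i hi)
  have h := eq_zero_of_add_mem_of_sub_mem_extremePoints hv hadd
    (by convert hsub using 1; ext; simp [sub_eq_add_neg])
  exact hd0 (funext fun j => by simpa using congrFun h j)

end IntegerMatrix

theorem vertex_has_deep_base_general {m n : ℕ}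
    (A : Matrix (Fin m) (Fin n) ℤ) (b : Fin m → ℤ) (Δ : ℕ)
    (hΔ : maxAbsSubdet A = Δ)
    (hrank : (matR A).rank = n) :
    ∀ v ∈ Set.extremePoints ℝ (intHull A b),
      ∃ B : Finset (Fin m), DeepBase A b Δ B ∧
        ∀ i ∈ B, |(b i : ℝ) - (matR A).mulVec v i| ≤ (Δ : ℝ) - 1 := by
  intro v hv
  have hvP := (extremePoints_convexHull_subset hv).1
  obtain ⟨w, rfl, hw⟩ := mem_poly_inter_intPts_iff.mp (extremePoints_convexHull_subset hv)
  subst hΔ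
  obtain ⟨B, hBF, hBcard, hBind⟩ := exists_finset_subset_linearIndepOn_card_eq_finrank
    (span_rows_slack_lt_maxAbsSubdet_eq_top A b hrank hw hv)
  rw [Module.finrank_fin_fun] at hBcard
  have hslack : ∀ i ∈ B, 0 ≤ (b i : ℝ) - (matR A *ᵥ (↑) ∘ w) i ∧
      (b i : ℝ) - (matR A *ᵥ (↑) ∘ w) i ≤ maxAbsSubdet A - 1 := fun i hi => by
    have hlt : b i - (A *ᵥ w) i < maxAbsSubdet A := hBF hi
    have hle : (A *ᵥ w) i ≤ b i := hw i
    rw [matR_mulVec_intCast, Function.comp_apply]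
    constructor
    · exact_mod_cast sub_nonneg.mpr hle
    · exact_mod_cast Int.le_sub_one_of_lt hlt
  have hdet := det_submatrix_ne_zero_of_linearIndependent A
    (hBind.comp _ (B.orderIsoOfFin hBcard).injective)
  refine ⟨B, ⟨hBcard, hdet, Int.cast ∘ w, fun i hi => by linarith [hslack i hi], hvP⟩,
    fun i hi => abs_le.mpr ⟨by linarith [hslack i hi], (hslack i hi).2⟩⟩

/-- Every vertex `v` of the integer hull admits a `Δ`-deep base `B` with
`‖b_B - A_B v‖_∞ ≤ Δ - 1`. -/
theorem vertex_has_deep_base {m n : ℕ}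
    (A : Matrix (Fin m) (Fin n) ℤ) (b : Fin m → ℤ) (Δ : ℕ)
    (hΔ : maxAbsSubdet A = Δ) (hΔ1 : 1 ≤ Δ)
    (hrank : (matR A).rank = n)
    (hfull : affineSpan ℝ (poly A b) = ⊤) :
    ∀ v ∈ Set.extremePoints ℝ (intHull A b),
      ∃ B : Finset (Fin m), DeepBase A b Δ B ∧
        ∀ i ∈ B, |(b i : ℝ) - (matR A).mulVec v i| ≤ (Δ : ℝ) - 1 :=
  vertex_has_deep_base_general A b Δ hΔ hrank
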